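/- Let X ⊂ ℂⁿ be compact and let f ∈ ℂ[z₁,…,zₙ] be a polynomial that is real-valued on X. Then X is polynomially convex if and only if for each t ∈ ℝ the fibre f⁻¹{t} ∩ X is polynomially convex. -/

import Mathlib

open Complex Metric Set

/-- Polynomial convexity for a subset of ℂⁿ. -/
def PolyConvexN (n : ℕ) (K : Set (Fin n → ℂ)) : Prop :=
  {z : Fin n → ℂ | ∀ P : MvPolynomial (Fin n) ℂ,
      ‖MvPolynomial.eval z P‖ ≤ ⨆ w ∈ K, ‖MvPolynomial.eval w P‖} = K

/-!
A polynomial `f` that is real on `X` is real on the hull `X̂`: testing `X̂` against `(f - i s)²`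
for every real `s` bounds `(Im f)² - 2 s Im f` uniformly in `s`.
Now let `z ∈ X̂` with `f z = t`, and let `P` be a polynomial. On the compact set of points of `X`
where `|P| ≥ max_{X_t} |P| + ε` we have `|f - t| ≥ δ > 0`, where `X_t = X ∩ f⁻¹{t}`; so there
`Q = 1 - (f - t)² / B²`, with `B ≥ max_X |f - t|`, satisfies `0 ≤ Q ≤ q < 1`, while `0 ≤ Q ≤ 1`
on `X` and `Q z = 1`.
Testing `X̂` against `P Qᵏ` for large `k` gives `|P z| ≤ max_{X_t} |P| + ε`, so `z ∈ X̂_t`.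
Hence `X̂ ⊆ ⋃ₜ X̂_t`, and conversely `X̂_t ⊆ X̂ ∩ f⁻¹{t}`.
-/

open MvPolynomial Filter Topology

lemma IsCompact.le_biSup {α : Type*} [TopologicalSpace α] {K : Set α} (hK : IsCompact K)
    {g : α → ℝ} (hg : ContinuousOn g K) {z : α} (hz : z ∈ K) : g z ≤ ⨆ w ∈ K, g w := by
  obtain ⟨c, hc⟩ := hK.bddAbove_image hg
  refine le_ciSup₂ (f := fun w (_ : w ∈ K) => g w) ⟨c, ?_⟩ z hz
  rintro _ ⟨_, ⟨w, rfl⟩, ⟨hw, rfl⟩⟩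
  exact hc ⟨w, hw, rfl⟩

lemma IsCompact.exists_pos_forall_le_of_superlevel {α : Type*} [TopologicalSpace α]
    {X : Set α} (hX : IsCompact X) {g h : α → ℝ} (hg : Continuous g) (hh : Continuous h)
    {m : ℝ} (H : ∀ x ∈ X, m ≤ g x → 0 < h x) : ∃ δ > 0, ∀ x ∈ X, m ≤ g x → δ ≤ h x := by
  have hC : IsCompact (X ∩ g ⁻¹' Ici m) := hX.inter_right (isClosed_Ici.preimage hg)
  obtain ⟨δ, hδ, hδC⟩ := hC.exists_forall_le' hh.continuousOn fun x hx => H x hx.1 hx.2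
  exact ⟨δ, hδ, fun x hx hgx => hδC x ⟨hx, hgx⟩⟩

section PolynomialHull

variable {σ : Type*} {K L X : Set (σ → ℂ)} {z : σ → ℂ} {f P : MvPolynomial σ ℂ}

def polyHull (K : Set (σ → ℂ)) : Set (σ → ℂ) :=
  {z | ∀ P : MvPolynomial σ ℂ, ‖eval z P‖ ≤ ⨆ w ∈ K, ‖eval w P‖}

lemma isCompact_fibre (hX : IsCompact X) (f : MvPolynomial σ ℂ) (c : ℂ) :
    IsCompact ((fun w => eval w f) ⁻¹' {c} ∩ X) :=
  hX.inter_left (isClosed_singleton.preimage (continuous_eval f))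

lemma biSup_norm_eval_nonneg (K : Set (σ → ℂ)) (P : MvPolynomial σ ℂ) :
    0 ≤ ⨆ w ∈ K, ‖eval w P‖ :=
  Real.iSup_nonneg fun _ => Real.iSup_nonneg fun _ => norm_nonneg _

lemma norm_eval_le_of_mem_polyHull (hz : z ∈ polyHull K) {c : ℝ} (hc : 0 ≤ c)
    (h : ∀ w ∈ K, ‖eval w P‖ ≤ c) : ‖eval z P‖ ≤ c :=
  (hz P).trans <| Real.iSup_le (fun w => Real.iSup_le (h w) hc) hc

lemma subset_polyHull (hK : IsCompact K) : K ⊆ polyHull K :=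
  fun _ hz P => hK.le_biSup (continuous_eval P).norm.continuousOn hz

lemma polyHull_mono (hL : IsCompact L) (hKL : K ⊆ L) : polyHull K ⊆ polyHull L := by
  intro z hz P
  exact norm_eval_le_of_mem_polyHull hz (biSup_norm_eval_nonneg L P)
    fun w hw => subset_polyHull hL (hKL hw) P

lemma polyHull_subset_eval_eq {c : ℂ} (h : ∀ w ∈ K, eval w f = c) :
    polyHull K ⊆ {z | eval z f = c} := by
  intro z hz
  have := norm_eval_le_of_mem_polyHull (P := f - C c) hz le_rfl fun w hw => by simp [h w hw]
  simpa [sub_eq_zero] using this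

lemma eval_im_eq_zero_of_mem_polyHull (hX : IsCompact X) (hreal : ∀ x ∈ X, (eval x f).im = 0)
    (hz : z ∈ polyHull X) : (eval z f).im = 0 := by
  obtain ⟨M, hM⟩ := hX.exists_bound_of_continuousOn (continuous_eval f).continuousOn
  have sq_norm_sub (w : ℂ) (s : ℝ) : ‖w - s * I‖ ^ 2 = w.re ^ 2 + (w.im - s) ^ 2 := by
    rw [Complex.sq_norm, Complex.normSq_apply]
    simp only [sub_re, sub_im, mul_re, mul_im, ofReal_re, ofReal_im, I_re, I_im]
    ring
  set b := (eval z f).im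
  have key (s : ℝ) : b ^ 2 - 2 * b * s ≤ M ^ 2 := by
    have hX' : ∀ x ∈ X, ‖eval x ((f - C (s * I)) ^ 2)‖ ≤ M ^ 2 + s ^ 2 := by
      intro x hx
      have hre : |(eval x f).re| ≤ M := (abs_re_le_norm _).trans (hM x hx)
      have := sq_le_sq' (abs_le.1 hre).1 (abs_le.1 hre).2
      simp only [map_pow, map_sub, eval_C, norm_pow, sq_norm_sub, hreal x hx]
      linarith
    have hz' := norm_eval_le_of_mem_polyHull hz (by positivity) hX'
    simp only [map_pow, map_sub, eval_C, norm_pow, sq_norm_sub] at hz'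
    nlinarith [sq_nonneg (eval z f).re]
  by_contra hb
  have := key (-M ^ 2 / b)
  rw [mul_assoc, mul_div_cancel₀ _ hb] at this
  nlinarith [sq_pos_of_ne_zero hb]

lemma norm_eval_le_of_mem_polyHull_of_peak (hX : IsCompact X) (hz : z ∈ polyHull X)
    {Q : MvPolynomial σ ℂ} {m q : ℝ} (hm : 0 < m) (hq0 : 0 ≤ q) (hq1 : q < 1)
    (hQz : eval z Q = 1) (hQ : ∀ x ∈ X, ‖eval x Q‖ ≤ 1)
    (hQq : ∀ x ∈ X, m < ‖eval x P‖ → ‖eval x Q‖ ≤ q) : ‖eval z P‖ ≤ m := by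
  obtain ⟨C, hC⟩ := hX.exists_bound_of_continuousOn (continuous_eval P).continuousOn
  have hlim : Tendsto (fun k : ℕ => C * q ^ k) atTop (𝓝 0) := by
    simpa using (tendsto_pow_atTop_nhds_zero_of_lt_one hq0 hq1).const_mul C
  obtain ⟨k, hk⟩ := (hlim.eventually (gt_mem_nhds hm)).exists
  have hPQ : ‖eval z P‖ = ‖eval z (P * Q ^ k)‖ := by simp [hQz]
  rw [hPQ]
  refine norm_eval_le_of_mem_polyHull hz hm.le fun x hx => ?_
  rw [map_mul, map_pow, norm_mul, norm_pow]
  by_cases hPx : m < ‖eval x P‖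
  · have hC0 : 0 ≤ C := (norm_nonneg _).trans (hC x hx)
    calc ‖eval x P‖ * ‖eval x Q‖ ^ k
        ≤ C * q ^ k := by gcongr; exacts [hC x hx, hQq x hx hPx]
      _ ≤ m := hk.le
  · calc ‖eval x P‖ * ‖eval x Q‖ ^ k
        ≤ m * 1 := by gcongr; exacts [not_lt.1 hPx, pow_le_one₀ (norm_nonneg _) (hQ x hx)]
      _ = m := mul_one m

lemma exists_peak_polynomial (hX : IsCompact X) (hreal : ∀ x ∈ X, (eval x f).im = 0) (t : ℝ)
    {δ : ℝ} (hδ : 0 < δ) :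
    ∃ Q : MvPolynomial σ ℂ, ∃ q : ℝ, 0 ≤ q ∧ q < 1 ∧ (∀ z, eval z f = t → eval z Q = 1) ∧
      ∀ x ∈ X, ‖eval x Q‖ ≤ 1 ∧ (δ ≤ ‖eval x f - t‖ → ‖eval x Q‖ ≤ q) := by
  obtain ⟨M, hM⟩ := hX.exists_bound_of_continuousOn
    ((continuous_eval f).sub continuous_const).continuousOn (f := fun x => eval x f - t)
  set B := max M δ
  have hB : 0 < B := hδ.trans_le (le_max_right _ _)
  set Q : MvPolynomial σ ℂ := 1 - C (((B ^ 2)⁻¹ : ℝ) : ℂ) * (f - C (t : ℂ)) ^ 2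
  have eval_Q (x : σ → ℂ) (r : ℝ) (hr : eval x f - t = r) :
      eval x Q = ((1 - r ^ 2 / B ^ 2 : ℝ) : ℂ) := by
    simp only [Q, map_sub, map_one, map_mul, map_pow, eval_C, hr]
    push_cast
    ring
  refine ⟨Q, 1 - δ ^ 2 / B ^ 2, ?_, ?_, fun z hz => ?_, fun x hx => ?_⟩
  · rw [sub_nonneg, div_le_one (by positivity)]
    exact pow_le_pow_left₀ hδ.le (le_max_right _ _) 2
  · have : 0 < δ ^ 2 / B ^ 2 := by positivity
    linarith
  · simpa using eval_Q z 0 (by simp [hz])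
  set r := (eval x f).re - t
  have hr : eval x f - t = r := Complex.ext (by simp [r]) (by simp [hreal x hx])
  have hrB : |r| ≤ B := by
    have := (hM x hx).trans (le_max_left M δ)
    rwa [hr, norm_real, Real.norm_eq_abs] at this
  have hr_le : r ^ 2 / B ^ 2 ≤ 1 := by
    rw [div_le_one (by positivity), ← sq_abs]
    exact pow_le_pow_left₀ (abs_nonneg r) hrB 2
  rw [eval_Q x r hr, hr, norm_real, norm_real, Real.norm_eq_abs, Real.norm_eq_abs,
    abs_of_nonneg (sub_nonneg.2 hr_le)]
  have hr0 : 0 ≤ r ^ 2 / B ^ 2 := by positivity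
  refine ⟨by linarith, fun hδr => ?_⟩
  have : δ ^ 2 ≤ r ^ 2 := by rw [← sq_abs r]; exact pow_le_pow_left₀ hδ.le hδr 2
  have : δ ^ 2 / B ^ 2 ≤ r ^ 2 / B ^ 2 := by gcongr
  linarith

theorem mem_polyHull_fibre_of_mem_polyHull (hX : IsCompact X)
    (hreal : ∀ x ∈ X, (eval x f).im = 0) (hz : z ∈ polyHull X) {t : ℝ} (ht : eval z f = t) :
    z ∈ polyHull ((fun w => eval w f) ⁻¹' {(t : ℂ)} ∩ X) := by
  set F := (fun w => eval w f) ⁻¹' {(t : ℂ)} ∩ X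
  intro P
  refine le_of_forall_pos_le_add fun ε hε => ?_
  set m := (⨆ w ∈ F, ‖eval w P‖) + ε
  have hm : 0 < m := add_pos_of_nonneg_of_pos (biSup_norm_eval_nonneg F P) hε
  obtain ⟨δ, hδ, hδX⟩ := hX.exists_pos_forall_le_of_superlevel (continuous_eval P).norm
    ((continuous_eval f).sub continuous_const).norm (m := m) fun x hx hPx => by
      refine norm_pos_iff.2 (sub_ne_zero.2 fun hfx => ?_)
      have := subset_polyHull (isCompact_fibre hX f t) ⟨hfx, hx⟩ P
      linarith
  obtain ⟨Q, q, hq0, hq1, hQz, hQX⟩ := exists_peak_polynomial hX hreal t hδ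
  exact norm_eval_le_of_mem_polyHull_of_peak hX hz hm hq0 hq1 (hQz z ht)
    (fun x hx => (hQX x hx).1) fun x hx hPx => (hQX x hx).2 (hδX x hx hPx.le)

end PolynomialHull

lemma polyConvexN_iff_polyHull_subset {n : ℕ} {K : Set (Fin n → ℂ)} (hK : IsCompact K) :
    PolyConvexN n K ↔ polyHull K ⊆ K :=
  (Subset.antisymm_iff (a := polyHull K)).trans (and_iff_left (subset_polyHull hK))

/-- Stout: if a polynomial f is real-valued on a compact X ⊆ ℂⁿ, then
X is polynomially convex iff every real fibre f⁻¹{t} ∩ X is polynomially convex. -/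
theorem polyConvex_iff_fibres_polyConvex (n : ℕ) (X : Set (Fin n → ℂ))
    (hX : IsCompact X) (f : MvPolynomial (Fin n) ℂ)
    (hreal : ∀ x ∈ X, (MvPolynomial.eval x f).im = 0) :
    PolyConvexN n X ↔
      ∀ t : ℝ, PolyConvexN n ((fun z => MvPolynomial.eval z f) ⁻¹' {(t : ℂ)} ∩ X) := by
  simp only [polyConvexN_iff_polyHull_subset hX,
    polyConvexN_iff_polyHull_subset (isCompact_fibre hX f _)]
  constructor
  · intro hXc t z hz
    exact ⟨polyHull_subset_eval_eq (fun w hw => hw.1) hz,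
      hXc (polyHull_mono hX inter_subset_right hz)⟩
  · intro hfib z hz
    have ht : eval z f = ((eval z f).re : ℂ) :=
      Complex.ext rfl (by simp [eval_im_eq_zero_of_mem_polyHull hX hreal hz])
    exact (hfib _ (mem_polyHull_fibre_of_mem_polyHull hX hreal hz ht)).2
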